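/- arXiv:1210.1199 — 2 statements merged into one kernel-verified Lean document; each statement's English description precedes it below -/
import Mathlib

section
/- Let ι be a finite index set, H a complex inner product space, (U_i)_{i∈ι} a family of unitary operators on H, and S ⊆ ι. Let U and Ũ_S be the block operators on the ℓ²-direct sum ⊕_{i∈ι} H given by (U v)_i = U_i v_i and (Ũ_S v)_i = U_i v_i for i ∈ S, (Ũ_S v)_i = v_i for i ∉ S. Then for every v ∈ ⊕_{i∈ι} H, Re⟨Ũ_S v, U v⟩ ≥ Σ_{i∈S} ‖v_i‖² − Σ_{i∉S} ‖v_i‖². In particular, if ‖v‖ = 1 then Re⟨Ũ_S v, U v⟩ ≥ 1 − 2 Σ_{i∉S} ‖v_i‖². -/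
open RCLike

section LinearIsometry

variable {𝕜 E : Type*} [RCLike 𝕜] [NormedAddCommGroup E] [InnerProductSpace 𝕜 E]

theorem neg_norm_mul_norm_le_re_inner (x y : E) : -(‖x‖ * ‖y‖) ≤ re (inner 𝕜 x y) := by
  have h := re_inner_le_norm (𝕜 := 𝕜) x (-y)
  rw [inner_neg_right, map_neg, norm_neg] at h
  linarith

theorem LinearIsometry.neg_norm_sq_le_re_inner_map (f : E →ₗᵢ[𝕜] E) (x : E) :
    -‖x‖ ^ 2 ≤ re (inner 𝕜 x (f x)) := by
  simpa [sq] using neg_norm_mul_norm_le_re_inner (𝕜 := 𝕜) x (f x)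

theorem LinearIsometry.re_inner_map_map_self (f : E →ₗᵢ[𝕜] E) (x : E) :
    re (inner 𝕜 (f x) (f x)) = ‖x‖ ^ 2 := by
  rw [f.inner_map_map, inner_self_eq_norm_sq]

end LinearIsometry

/-- The (real-part) fidelity estimate of Lemma 3.1 (averaging costs): for the block
(controlled) unitaries `U` and `Ũ_S` on the ℓ²-direct sum `⊕_{i∈ι} H`,
`Re⟨Ũ_S v, U v⟩ ≥ Σ_{i∈S} ‖v_i‖² − Σ_{i∉S} ‖v_i‖²`, and if `‖v‖ = 1` then
`Re⟨Ũ_S v, U v⟩ ≥ 1 − 2 Σ_{i∉S} ‖v_i‖²`. -/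
theorem stmt_2 {ι : Type*} [Fintype ι] [DecidableEq ι] {H : Type*}
    [NormedAddCommGroup H] [InnerProductSpace ℂ H]
    (U : ι → (H ≃ₗᵢ[ℂ] H)) (S : Finset ι) (v : PiLp 2 (fun _ : ι => H)) :
    ((inner ℂ ((WithLp.equiv 2 (∀ _ : ι, H)).symm
               (fun i => if i ∈ S then U i (v i) else v i))
            ((WithLp.equiv 2 (∀ _ : ι, H)).symm (fun i => U i (v i))) : ℂ)).re
        ≥ (∑ i ∈ S, ‖v i‖ ^ 2) - ∑ i ∈ Sᶜ, ‖v i‖ ^ 2 ∧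
    (‖v‖ = 1 →
      ((inner ℂ ((WithLp.equiv 2 (∀ _ : ι, H)).symm
                 (fun i => if i ∈ S then U i (v i) else v i))
              ((WithLp.equiv 2 (∀ _ : ι, H)).symm (fun i => U i (v i))) : ℂ)).re
        ≥ 1 - 2 * ∑ i ∈ Sᶜ, ‖v i‖ ^ 2) := by
  have key : (∑ i ∈ S, ‖v i‖ ^ 2) - ∑ i ∈ Sᶜ, ‖v i‖ ^ 2 ≤
      ((inner ℂ ((WithLp.equiv 2 (∀ _ : ι, H)).symm
               (fun i => if i ∈ S then U i (v i) else v i))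
            ((WithLp.equiv 2 (∀ _ : ι, H)).symm (fun i => U i (v i))) : ℂ)).re := by
    simp only [WithLp.equiv_symm_apply, PiLp.inner_apply, Complex.re_sum]
    rw [← Finset.sum_add_sum_compl S, sub_eq_add_neg, ← Finset.sum_neg_distrib]
    gcongr with i hi i hi
    · rw [if_pos hi]
      exact ((U i).toLinearIsometry.re_inner_map_map_self (v i)).ge
    · rw [if_neg (Finset.mem_compl.mp hi)]
      exact (U i).toLinearIsometry.neg_norm_sq_le_re_inner_map (v i)
  refine ⟨key, fun hv => ?_⟩
  have hnorm : (∑ i ∈ S, ‖v i‖ ^ 2) + ∑ i ∈ Sᶜ, ‖v i‖ ^ 2 = 1 := by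
    rw [Finset.sum_add_sum_compl, ← PiLp.norm_sq_eq_of_L2, hv, one_pow]
  linarith
end

section
/- Let ι be a finite index set, H a complex inner product space, (U_i)_{i∈ι} a family of unitary operators on H, and q : ι → ℝ a family of nonnegative costs. Let v ∈ ⊕_{i∈ι} H (the ℓ²-direct sum) with ‖v‖ = 1, let Q = Σ_{i∈ι} ‖v_i‖² q_i, and for k ≥ 1 let S = {i ∈ ι : q_i ≤ k·Q}. Let U and Ũ_S be the block operators given by (U v)_i = U_i v_i and (Ũ_S v)_i = U_i v_i for i ∈ S, (Ũ_S v)_i = v_i for i ∉ S. Then ‖U v − Ũ_S v‖² ≤ 4/k. -/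
/-- The quantitative content of the final claim of Lemma 3.1 (averaging costs):
with `Q = Σ_i ‖v_i‖² q_i` and `S = {i : q_i ≤ k·Q}`, the block unitary `U` is
approximated by `Ũ_S` with `‖U v − Ũ_S v‖² ≤ 4/k` on any unit vector `v`. -/
theorem stmt_4 {ι : Type*} [Fintype ι] [DecidableEq ι] {H : Type*}
    [NormedAddCommGroup H] [InnerProductSpace ℂ H]
    (U : ι → (H ≃ₗᵢ[ℂ] H)) (q : ι → ℝ) (hq : ∀ i, 0 ≤ q i)
    (v : PiLp 2 (fun _ : ι => H)) (hv : ‖v‖ = 1) (k : ℝ) (hk : 1 ≤ k) :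
    ‖((WithLp.equiv 2 (∀ _ : ι, H)).symm (fun i => U i (v i)))
        - ((WithLp.equiv 2 (∀ _ : ι, H)).symm
            (fun i => if q i ≤ k * ∑ j, ‖v j‖ ^ 2 * q j then U i (v i) else v i))‖ ^ 2
      ≤ 4 / k := by
  set Q := ∑ j, ‖v j‖ ^ 2 * q j with hQdef
  have hk0 : 0 < k := lt_of_lt_of_le one_pos hk
  have hQ0 : 0 ≤ Q := Finset.sum_nonneg fun i _ => mul_nonneg (sq_nonneg _) (hq i)
  have hnorm : ‖((WithLp.equiv 2 (∀ _ : ι, H)).symm (fun i => U i (v i)))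
        - ((WithLp.equiv 2 (∀ _ : ι, H)).symm
            (fun i => if q i ≤ k * Q then U i (v i) else v i))‖ ^ 2
      = ∑ i, ‖U i (v i) - (if q i ≤ k * Q then U i (v i) else v i)‖ ^ 2 := by
    rw [PiLp.norm_sq_eq_of_L2]
    refine Finset.sum_congr rfl fun i _ => ?_
    congr 1
  rw [hnorm]
  rcases eq_or_lt_of_le hQ0 with hQz | hQpos
  · -- Q = 0 : every term vanishes
    have : ∀ i ∈ Finset.univ, ‖U i (v i) - (if q i ≤ k * Q then U i (v i) else v i)‖ ^ 2 = 0 := by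
      intro i _
      by_cases hi : q i ≤ k * Q
      · simp [hi]
      · have hvi : ‖v i‖ ^ 2 * q i = 0 := by
          have := (Finset.sum_eq_zero_iff_of_nonneg
            (fun j _ => mul_nonneg (sq_nonneg ‖v j‖) (hq j))).mp hQz.symm i (Finset.mem_univ i)
          exact this
        have hqi : 0 < q i := by
          by_contra h
          exact hi (by nlinarith [hq i])
        have : ‖v i‖ ^ 2 = 0 := by
          rcases mul_eq_zero.mp hvi with h | h
          · exact h
          · exact absurd h hqi.ne'
        have hv0 : v i = 0 := by
          have := pow_eq_zero_iff (n := 2) (by norm_num) |>.mp this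
          exact norm_eq_zero.mp this
        simp [hi, hv0]
    rw [Finset.sum_eq_zero this]
    positivity
  · -- Q > 0 : Markov bound
    have key : ∀ i ∈ Finset.univ,
        ‖U i (v i) - (if q i ≤ k * Q then U i (v i) else v i)‖ ^ 2
          ≤ (4 / (k * Q)) * (‖v i‖ ^ 2 * q i) := by
      intro i _
      have hrhs : 0 ≤ (4 / (k * Q)) * (‖v i‖ ^ 2 * q i) :=
        mul_nonneg (by positivity) (mul_nonneg (sq_nonneg _) (hq i))
      by_cases hi : q i ≤ k * Q
      · simpa [hi] using hrhs
      · push_neg at hi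
        have h1 : ‖U i (v i) - v i‖ ≤ 2 * ‖v i‖ := by
          calc ‖U i (v i) - v i‖ ≤ ‖U i (v i)‖ + ‖v i‖ := norm_sub_le _ _
            _ = 2 * ‖v i‖ := by rw [(U i).norm_map]; ring
        have h2 : ‖U i (v i) - v i‖ ^ 2 ≤ 4 * ‖v i‖ ^ 2 := by
          nlinarith [norm_nonneg (U i (v i) - v i), norm_nonneg (v i)]
        have h3 : 4 * ‖v i‖ ^ 2 ≤ (4 / (k * Q)) * (‖v i‖ ^ 2 * q i) := by
          rw [div_mul_eq_mul_div, le_div_iff₀ (by positivity)]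
          nlinarith [sq_nonneg ‖v i‖, hi.le]
        rw [if_neg (not_le.mpr hi)]; exact h2.trans h3
    calc ∑ i, ‖U i (v i) - (if q i ≤ k * Q then U i (v i) else v i)‖ ^ 2
        ≤ ∑ i, (4 / (k * Q)) * (‖v i‖ ^ 2 * q i) := Finset.sum_le_sum key
      _ = (4 / (k * Q)) * Q := by rw [← Finset.mul_sum]
      _ = 4 / k := by field_simp
end
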